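/- arXiv:1608.06738 — 2 statements merged into one kernel-verified Lean document; each statement's English description precedes it below -/
import Mathlib

section
/- Let Q be a quadratic form on ℝ^d with associated symmetric bilinear form B, v ∈ ℝ^d, u ∈ ℝ^d with |u| = 1 and Q(u) = 0. Fix x ∈ ℝ^d with B(x,u) + ⟨v,u⟩ ≠ 0. Then the only y ∈ ℝ^d satisfying Q(y) + 2⟨y,v⟩ = Q(x) + 2⟨x,v⟩ and π_u(y) = π_u(x) is y = x. -/
open scoped RealInnerProductSpace

/-- Lemma 2.1 (case `Q(u) = 0`, `B(x,u) + ⟨v,u⟩ ≠ 0`): the only solution of the system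
`Q(y) + 2⟨y,v⟩ = Q(x) + 2⟨x,v⟩`, `π_u(y) = π_u(x)` is `y = x`. -/
theorem stmt_1 {d : ℕ} (B : EuclideanSpace ℝ (Fin d) →ₗ[ℝ] EuclideanSpace ℝ (Fin d) →ₗ[ℝ] ℝ)
    (hBsymm : ∀ x y, B x y = B y x)
    (v u x : EuclideanSpace ℝ (Fin d)) (hu : ‖u‖ = 1) (hQu : B u u = 0)
    (hx : B x u + ⟪v, u⟫ ≠ 0) :
    {y : EuclideanSpace ℝ (Fin d) |
        B y y + 2 * ⟪y, v⟫ = B x x + 2 * ⟪x, v⟫ ∧ y - ⟪y, u⟫ • u = x - ⟪x, u⟫ • u}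
      = {x} := by
  ext y
  simp only [Set.mem_setOf_eq, Set.mem_singleton_iff]
  constructor
  · rintro ⟨h1, h2⟩
    set t : ℝ := ⟪y, u⟫ - ⟪x, u⟫ with ht
    have hy : y = x + t • u := by
      have : y - x = t • u := by
        have := sub_eq_sub_iff_sub_eq_sub.mp h2
        rw [this, ht, sub_smul]
      linear_combination (norm := module) this
    rw [hy] at h1
    have hvu : ⟪u, v⟫ = ⟪v, u⟫ := real_inner_comm v u
    have h3 : 2 * t * (B x u + ⟪v, u⟫) = 0 := by
      have hiv : ⟪x + t • u, v⟫ = ⟪x, v⟫ + t * ⟪u, v⟫ := by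
        rw [inner_add_left, real_inner_smul_left]
      have hB : B (x + t • u) (x + t • u)
          = B x x + 2 * t * B x u + t * t * B u u := by
        simp only [map_add, map_smul, LinearMap.add_apply, LinearMap.smul_apply,
          smul_eq_mul]
        rw [hBsymm u x]; ring
      rw [hiv, hB, hQu] at h1
      linear_combination h1 - 2 * t * hvu
    have ht0 : t = 0 := by
      rcases mul_eq_zero.mp h3 with h | h
      · rcases mul_eq_zero.mp h with h' | h'
        · norm_num at h'
        · exact h'
      · exact absurd h hx
    rw [hy, ht0, zero_smul, add_zero]
  · rintro rfl
    exact ⟨rfl, rfl⟩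
end

section
/- Let Q(x) = x₁² + ··· + x_p² - x_{p+1}² - ··· - x_{p+q}² with p+q = d and let ρ > 0. Then there exist nonzero vectors u₁, ..., u_p with Q(u_j) = 0 for all j such that (S_ρ, H_{u₁} ∪ ··· ∪ H_{u_p}) is a Heisenberg uniqueness pair, where S_ρ = {x : Q(x) = ρ}. -/
/-! Fourier data on the hyperplane `u^⊥` determine the image of a measure under the orthogonal
projection along `u`. If `u` is isotropic, the line `x + t u` meets `S_ρ` again only where
`2 t B(x, u) = 0`, so this projection is injective on the part of `S_ρ` where `B(x, u) ≠ 0`, and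
there the measure is recovered from its image. For `u_j = e_j + e_{p+j}` these parts cover
`S_ρ`: if `x_j = x_{p+j}` for every `j`, then `Q(x) ≤ 0 < ρ`. -/

open MeasureTheory Complex
open scoped RealInnerProductSpace

noncomputable def FT {d : ℕ} (μ : Measure (EuclideanSpace ℝ (Fin d)))
    (ξ : EuclideanSpace ℝ (Fin d)) : ℂ :=
  ∫ x, Complex.exp (Complex.I * (⟪x, ξ⟫ : ℝ)) ∂μ

/-- `(S, Λ)` is a Heisenberg uniqueness pair: any two finite measures supported
in `S` whose Fourier transforms agree on `Λ` are equal (equivalently, every finite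
signed measure supported in `S` with Fourier transform vanishing on `Λ` is zero). -/
def IsHUP {d : ℕ} (S Λ : Set (EuclideanSpace ℝ (Fin d))) : Prop :=
  ∀ μ ν : Measure (EuclideanSpace ℝ (Fin d)), IsFiniteMeasure μ → IsFiniteMeasure ν →
    μ Sᶜ = 0 → ν Sᶜ = 0 → (∀ ξ ∈ Λ, FT μ ξ = FT ν ξ) → μ = ν

/-- The indefinite quadratic form `x₁² + ⋯ + x_p² - x_{p+1}² - ⋯ - x_d²`. -/
def Qpq {d : ℕ} (p : ℕ) (x : EuclideanSpace ℝ (Fin d)) : ℝ :=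
  ∑ j : Fin d, (if (j : ℕ) < p then 1 else -1) * x j ^ 2

/-- The bilinear form associated with `Qpq`. -/
def Bpq {d : ℕ} (p : ℕ) (x y : EuclideanSpace ℝ (Fin d)) : ℝ :=
  ∑ j : Fin d, (if (j : ℕ) < p then 1 else -1) * (x j * y j)

namespace MeasureTheory.Measure

variable {X Y : Type*} [MeasurableSpace X] [MeasurableSpace Y] {μ ν : Measure X} {S : Set X}

theorem eq_of_restrict_eq_of_subset_iUnion {ι : Type*} [Countable ι] {G : ι → Set X}
    (hμ : μ Sᶜ = 0) (hν : ν Sᶜ = 0) (hS : S ⊆ ⋃ i, G i)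
    (h : ∀ i, μ.restrict (G i) = ν.restrict (G i)) : μ = ν := by
  have restrict_iUnion_eq : ∀ κ : Measure X, κ Sᶜ = 0 → κ.restrict (⋃ i, G i) = κ :=
    fun κ hκ => restrict_eq_self_of_ae_mem (measure_mono_null (Set.compl_subset_compl.2 hS) hκ)
  rw [← restrict_iUnion_eq μ hμ, ← restrict_iUnion_eq ν hν, restrict_iUnion_congr.2 h]

theorem restrict_eq_of_map_eq_of_injOn [StandardBorelSpace X]
    [MeasurableSpace.CountablySeparated Y] {G : Set X} {f : X → Y} (hf : Measurable f)
    (hμ : μ Sᶜ = 0) (hν : ν Sᶜ = 0) (hG : MeasurableSet G) (hGS : G ⊆ S)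
    (hinj : ∀ x ∈ S, ∀ y ∈ G, f x = f y → x = y) (hmap : μ.map f = ν.map f) :
    μ.restrict G = ν.restrict G := by
  refine (restrict_congr_meas hG).2 fun E hEG hE => ?_
  have hfE : MeasurableSet (f '' E) :=
    hE.image_of_measurable_injOn hf fun x hx y hy hxy => hinj x (hGS (hEG hx)) y (hEG hy) hxy
  have preimage_inter : f ⁻¹' (f '' E) ∩ S = E := by
    refine Set.Subset.antisymm (fun x ⟨⟨y, hy, hxy⟩, hx⟩ => ?_)
      fun x hx => ⟨⟨x, hx, rfl⟩, hGS (hEG hx)⟩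
    exact hinj x hx y (hEG hy) hxy.symm ▸ hy
  have map_image : ∀ κ : Measure X, κ Sᶜ = 0 → κ.map f (f '' E) = κ E := fun κ hκ => by
    rw [map_apply hf hfE, ← measure_inter_conull hκ, preimage_inter]
  rw [← map_image μ hμ, hmap, map_image ν hν]

end MeasureTheory.Measure

section Projection

variable {E : Type*} [NormedAddCommGroup E] [InnerProductSpace ℝ E]

theorem sub_mem_orthogonal_of_starProjection_eq {K : Submodule ℝ E} [K.HasOrthogonalProjection]
    {x y : E} (h : K.starProjection x = K.starProjection y) : x - y ∈ Kᗮ := by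
  simpa [h] using
    Kᗮ.sub_mem (K.sub_starProjection_mem_orthogonal x) (K.sub_starProjection_mem_orthogonal y)

variable [MeasurableSpace E] [BorelSpace E]

theorem charFun_map_starProjection (K : Submodule ℝ E) [K.HasOrthogonalProjection]
    (μ : Measure E) (ξ : E) :
    charFun (μ.map K.starProjection) ξ = charFun μ (K.starProjection ξ) := by
  rw [charFun_apply, charFun_apply,
    integral_map K.starProjection.continuous.aemeasurable (by fun_prop)]
  simp_rw [K.inner_starProjection_left_eq_right]

theorem map_starProjection_eq_of_charFun_eqOn [CompleteSpace E] [SecondCountableTopology E]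
    {μ ν : Measure E} [IsFiniteMeasure μ] [IsFiniteMeasure ν] (K : Submodule ℝ E)
    [K.HasOrthogonalProjection] (h : Set.EqOn (charFun μ) (charFun ν) K) :
    μ.map K.starProjection = ν.map K.starProjection :=
  Measure.ext_of_charFun <| funext fun ξ => by
    simp only [charFun_map_starProjection, h (K.starProjection_apply_mem ξ)]

end Projection

theorem FT_eq_charFun {d : ℕ} (μ : Measure (EuclideanSpace ℝ (Fin d)))
    (ξ : EuclideanSpace ℝ (Fin d)) : FT μ ξ = charFun μ ξ := by
  simp only [FT, charFun_apply, mul_comm I]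

section QuadraticForm

variable {d : ℕ} (p : ℕ)

theorem Qpq_eq_Bpq_self (x : EuclideanSpace ℝ (Fin d)) : Qpq p x = Bpq p x x := by
  simp only [Qpq, Bpq, sq]

theorem Qpq_add_smul (x u : EuclideanSpace ℝ (Fin d)) (t : ℝ) :
    Qpq p (x + t • u) = Qpq p x + 2 * t * Bpq p x u + t ^ 2 * Qpq p u := by
  simp only [Qpq, Bpq, PiLp.add_apply, PiLp.smul_apply, smul_eq_mul, Finset.mul_sum,
    ← Finset.sum_add_distrib]
  exact Finset.sum_congr rfl fun i _ => by ring

theorem Bpq_add_right (x y z : EuclideanSpace ℝ (Fin d)) :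
    Bpq p x (y + z) = Bpq p x y + Bpq p x z := by
  simp only [Bpq, PiLp.add_apply, ← Finset.sum_add_distrib]
  exact Finset.sum_congr rfl fun i _ => by ring

theorem Bpq_single_right (x : EuclideanSpace ℝ (Fin d)) (i : Fin d) (c : ℝ) :
    Bpq p x (EuclideanSpace.single i c) = (if (i : ℕ) < p then 1 else -1) * (x i * c) := by
  simp [Bpq]

theorem measurable_Qpq : Measurable (Qpq (d := d) p) := by
  unfold Qpq; fun_prop

theorem measurable_Bpq_left (u : EuclideanSpace ℝ (Fin d)) : Measurable (Bpq p · u) := by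
  unfold Bpq; fun_prop

variable {p}

theorem eq_of_Qpq_eq_of_sub_mem_span {u x y : EuclideanSpace ℝ (Fin d)} (hu : Qpq p u = 0)
    (hy : Bpq p y u ≠ 0) (hxy : Qpq p x = Qpq p y) (h : x - y ∈ ℝ ∙ u) : x = y := by
  obtain ⟨t, ht⟩ := Submodule.mem_span_singleton.1 h
  rw [eq_add_of_sub_eq' ht.symm] at hxy ⊢
  rw [Qpq_add_smul, hu] at hxy
  have htB : t * Bpq p y u = 0 := by linarith
  simp [(mul_eq_zero.1 htB).resolve_right hy]

end QuadraticForm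

section IsotropicVectors

variable {p r : ℕ}

-- Writing the dimension as `p + (p + r)` exposes the coordinate blocks `[0, p)`, `[p, 2p)` and
-- `[2p, d)` as `Fin.castAdd` / `Fin.natAdd` images, so that `Fin.sum_univ_add` splits `Qpq`.
noncomputable def isotropicVec (p r : ℕ) (j : Fin p) : EuclideanSpace ℝ (Fin (p + (p + r))) :=
  EuclideanSpace.single (Fin.castAdd (p + r) j) 1 +
    EuclideanSpace.single (Fin.natAdd p (Fin.castAdd r j)) 1

theorem Bpq_isotropicVec (x : EuclideanSpace ℝ (Fin (p + (p + r)))) (j : Fin p) :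
    Bpq p x (isotropicVec p r j) =
      x (Fin.castAdd (p + r) j) - x (Fin.natAdd p (Fin.castAdd r j)) := by
  simp [isotropicVec, Bpq_add_right, Bpq_single_right, sub_eq_add_neg]

theorem Qpq_isotropicVec (j : Fin p) : Qpq p (isotropicVec p r j) = 0 := by
  rw [Qpq_eq_Bpq_self, Bpq_isotropicVec]
  simp [isotropicVec, Fin.ext_iff, j.pos.ne']

theorem isotropicVec_ne_zero (j : Fin p) : isotropicVec p r j ≠ 0 := fun h => by
  simpa [isotropicVec, Fin.ext_iff, j.pos.ne'] using congr($h (Fin.castAdd (p + r) j))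

theorem Qpq_eq_sum_sub_sum (x : EuclideanSpace ℝ (Fin (p + (p + r)))) :
    Qpq p x =
      ∑ j : Fin p, (x (Fin.castAdd (p + r) j) ^ 2 - x (Fin.natAdd p (Fin.castAdd r j)) ^ 2) -
        ∑ k : Fin r, x (Fin.natAdd p (Fin.natAdd p k)) ^ 2 := by
  simp only [Qpq, ite_mul, one_mul, neg_mul, Fin.sum_univ_add, Fin.val_castAdd, Fin.is_lt,
    ↓reduceIte, Fin.val_natAdd, add_lt_iff_neg_left, not_lt_zero, Finset.sum_neg_distrib,
    Finset.sum_sub_distrib]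
  ring

theorem exists_Bpq_isotropicVec_ne_zero {x : EuclideanSpace ℝ (Fin (p + (p + r)))}
    (hx : 0 < Qpq p x) : ∃ j, Bpq p x (isotropicVec p r j) ≠ 0 := by
  by_contra! h
  simp only [Bpq_isotropicVec, sub_eq_zero] at h
  have hx' : Qpq p x ≤ 0 := by
    rw [Qpq_eq_sum_sub_sum]
    simp only [h, sub_self, Finset.sum_const_zero, zero_sub, neg_nonpos]
    positivity
  linarith

end IsotropicVectors

theorem isHUP_Qpq_eq_isotropicVec (p r : ℕ) {ρ : ℝ} (hρ : 0 < ρ) :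
    IsHUP {x : EuclideanSpace ℝ (Fin (p + (p + r))) | Qpq p x = ρ}
      (⋃ j, {ξ | ⟪ξ, isotropicVec p r j⟫ = 0}) := by
  intro μ ν _ _ hμ hν hFT
  refine Measure.eq_of_restrict_eq_of_subset_iUnion hμ hν
    (G := fun j => {x | Qpq p x = ρ} ∩ {x | Bpq p x (isotropicVec p r j) ≠ 0})
    (fun x hx => ?_) fun j => ?_
  · obtain ⟨j, hj⟩ := exists_Bpq_isotropicVec_ne_zero (r := r) (hx.symm ▸ hρ : 0 < Qpq p x)
    exact Set.mem_iUnion.2 ⟨j, hx, hj⟩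
  set K := (ℝ ∙ isotropicVec p r j)ᗮ
  refine Measure.restrict_eq_of_map_eq_of_injOn K.starProjection.continuous.measurable hμ hν
    ((measurable_Qpq p (measurableSet_singleton ρ)).inter
      (measurable_Bpq_left p _ (measurableSet_singleton 0)).compl)
    Set.inter_subset_left (fun x hx y hy hxy => ?_)
    (map_starProjection_eq_of_charFun_eqOn K fun ξ hξ => ?_)
  · refine eq_of_Qpq_eq_of_sub_mem_span (Qpq_isotropicVec j) hy.2 (hx.trans hy.1.symm) ?_
    simpa [K] using sub_mem_orthogonal_of_starProjection_eq hxy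
  · rw [← FT_eq_charFun, ← FT_eq_charFun]
    exact hFT ξ (Set.mem_iUnion.2 ⟨j, Submodule.mem_orthogonal_singleton_iff_inner_left.1 hξ⟩)

theorem stmt_15_general {d p q : ℕ} (hpq' : p ≤ q)
    (hpq : p + q = d) (ρ : ℝ) (hρ : 0 < ρ) :
    ∃ u : Fin p → EuclideanSpace ℝ (Fin d),
      (∀ j, u j ≠ 0) ∧ (∀ j, Qpq p (u j) = 0) ∧
      IsHUP {x : EuclideanSpace ℝ (Fin d) | Qpq p x = ρ}
        (⋃ j, {ξ : EuclideanSpace ℝ (Fin d) | ⟪ξ, u j⟫ = 0}) := by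
  obtain ⟨r, rfl⟩ := Nat.exists_eq_add_of_le hpq'
  subst hpq
  exact ⟨isotropicVec p r, isotropicVec_ne_zero, Qpq_isotropicVec,
    isHUP_Qpq_eq_isotropicVec p r hρ⟩

/-- Proposition 4.3 (i): for `ρ > 0` there exist `p` nonzero isotropic vectors whose
hyperplanes together with `S_ρ` form a Heisenberg uniqueness pair. -/
theorem stmt_15 {d p q : ℕ} (hp : 1 ≤ p) (hpq' : p ≤ q) (hq : q ≤ d - 1)
    (hpq : p + q = d) (ρ : ℝ) (hρ : 0 < ρ) :
    ∃ u : Fin p → EuclideanSpace ℝ (Fin d),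
      (∀ j, u j ≠ 0) ∧ (∀ j, Qpq p (u j) = 0) ∧
      IsHUP {x : EuclideanSpace ℝ (Fin d) | Qpq p x = ρ}
        (⋃ j, {ξ : EuclideanSpace ℝ (Fin d) | ⟪ξ, u j⟫ = 0}) :=
  stmt_15_general hpq' hpq ρ hρ
end
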